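/- Let S be a finite non-abelian simple group and τ = τ_{a+b}(S). Then the graph Γ*_{a,b}(S^τ) is edge-transitive: for any two edges e₁, e₂ there is an automorphism of the graph induced by Aut(S^τ) sending e₁ to e₂. -/
import Mathlib

/-- The orbit relation of `Aut S` on generating `d`-tuples of `S`. -/
def autOrbitRel (S : Type*) [Group S] (d : ℕ) :
    {x : Fin d → S // Subgroup.closure (Set.range x) = ⊤} →
    {x : Fin d → S // Subgroup.closure (Set.range x) = ⊤} → Prop :=
  fun x y => ∃ φ : MulAut S, ∀ i, φ (x.1 i) = y.1 i

/-- `τ_d(S)`: the number of `Aut S`-orbits on ordered generating `d`-tuples of `S`. -/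
noncomputable def tauInv (S : Type*) [Group S] (d : ℕ) : ℕ :=
  Nat.card (Quot (autOrbitRel S d))

lemma autOrbitRel_equiv (S : Type*) [Group S] (d : ℕ) : Equivalence (autOrbitRel S d) := by
  constructor
  · intro x; exact ⟨1, fun i => rfl⟩
  · rintro x y ⟨φ, h⟩
    exact ⟨φ.symm, fun i => by rw [← h i]; exact φ.symm_apply_apply _⟩
  · rintro x y z ⟨φ, h⟩ ⟨ψ, h'⟩
    exact ⟨ψ * φ, fun i => by rw [MulAut.mul_apply, h, h']⟩

lemma coord_gen {S : Type*} [Group S] {n d : ℕ} (z : Fin d → (Fin n → S))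
    (h : Subgroup.closure (Set.range z) = ⊤) (i : Fin n) :
    Subgroup.closure (Set.range fun j => z j i) = ⊤ := by
  have hs : Function.Surjective (Pi.evalMonoidHom (fun _ : Fin n => S) i) :=
    fun s => ⟨fun _ => s, rfl⟩
  have h1 := MonoidHom.map_closure (Pi.evalMonoidHom (fun _ : Fin n => S) i) (Set.range z)
  rw [h, Subgroup.map_top_of_surjective _ hs] at h1
  rw [← Set.range_comp] at h1
  exact h1.symm

lemma coord_ne {S : Type*} [Group S] (hnt : Nontrivial S) {n d : ℕ}
    (z : Fin d → (Fin n → S)) (h : Subgroup.closure (Set.range z) = ⊤)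
    {i i' : Fin n} (hne : i ≠ i') (φ : MulAut S) (hφ : ∀ j, φ (z j i) = z j i') : False := by
  let H : Subgroup (Fin n → S) :=
    { carrier := {g | φ (g i) = g i'}
      mul_mem' := fun ha hb => by simp_all
      one_mem' := by simp
      inv_mem' := fun ha => by simp_all }
  have hH : H = ⊤ := by
    rw [eq_top_iff, ← h]
    exact Subgroup.closure_le H |>.mpr (by rintro _ ⟨j, rfl⟩; exact hφ j)
  obtain ⟨s, hs⟩ := exists_ne (1 : S)
  have : Function.update (1 : Fin n → S) i' s ∈ H := hH ▸ Subgroup.mem_top _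
  have h2 : φ ((Function.update (1 : Fin n → S) i' s) i) =
      (Function.update (1 : Fin n → S) i' s) i' := this
  rw [Function.update_of_ne hne, Function.update_self] at h2
  simp at h2
  exact hs h2.symm

lemma gen_trans {S : Type*} [Group S] [Finite S] (hnt : Nontrivial S) {d : ℕ}
    (z₁ z₂ : Fin d → (Fin (tauInv S d) → S))
    (h₁ : Subgroup.closure (Set.range z₁) = ⊤)
    (h₂ : Subgroup.closure (Set.range z₂) = ⊤) :
    ∃ k : MulAut (Fin (tauInv S d) → S), ∀ j, k (z₁ j) = z₂ j := by
  have hequiv := autOrbitRel_equiv S d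
  have : Finite {x : Fin d → S // Subgroup.closure (Set.range x) = ⊤} := Subtype.finite
  have hfin : Finite (Quot (autOrbitRel S d)) := Finite.of_surjective (Quot.mk (autOrbitRel S d)) Quot.mk_surjective
  -- the two maps from coordinates to orbits
  let F₁ : Fin (tauInv S d) → Quot (autOrbitRel S d) := fun i => Quot.mk (autOrbitRel S d) ⟨fun j => z₁ j i, coord_gen z₁ h₁ i⟩
  let F₂ : Fin (tauInv S d) → Quot (autOrbitRel S d) := fun i => Quot.mk (autOrbitRel S d) ⟨fun j => z₂ j i, coord_gen z₂ h₂ i⟩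
  have hcard : Nat.card (Fin (tauInv S d)) = Nat.card (Quot (autOrbitRel S d)) := by simp [tauInv]
  have hbij : ∀ (z : Fin d → (Fin (tauInv S d) → S)) (hz : Subgroup.closure (Set.range z) = ⊤),
      Function.Bijective (fun i => Quot.mk (autOrbitRel S d) ⟨fun j => z j i, coord_gen z hz i⟩) := by
    intro z hz
    refine (Nat.bijective_iff_injective_and_card _).mpr ⟨?_, hcard⟩
    intro i i' hii
    by_contra hne
    rw [Quot.eq] at hii
    rw [hequiv.eqvGen_iff] at hii
    obtain ⟨φ, hφ⟩ := hii
    exact coord_ne hnt z hz hne φ hφ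
  let E₁ : Fin (tauInv S d) ≃ Quot (autOrbitRel S d) := Equiv.ofBijective F₁ (hbij z₁ h₁)
  let E₂ : Fin (tauInv S d) ≃ Quot (autOrbitRel S d) := Equiv.ofBijective F₂ (hbij z₂ h₂)
  let σ : Fin (tauInv S d) ≃ Fin (tauInv S d) := E₁.trans E₂.symm
  have hσ : ∀ i, F₂ (σ i) = F₁ i := by
    intro i
    show E₂ (E₂.symm (E₁ i)) = E₁ i
    exact E₂.apply_symm_apply _
  have hrel : ∀ i, ∃ φ : MulAut S, ∀ j, φ (z₁ j i) = z₂ j (σ i) := by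
    intro i
    have := (hσ i).symm
    rw [Quot.eq, hequiv.eqvGen_iff] at this
    exact this
  choose φ hφ using hrel
  refine ⟨{ toFun := fun g i => φ (σ.symm i) (g (σ.symm i))
            invFun := fun g i => (φ i).symm (g (σ i))
            left_inv := fun g => funext fun i => by simp
            right_inv := fun g => funext fun i => by simp
            map_mul' := fun g h => funext fun i => by simp }, ?_⟩
  intro j
  funext i
  show φ (σ.symm i) (z₁ j (σ.symm i)) = z₂ j i
  rw [hφ, Equiv.apply_symm_apply]

theorem stmt_15 {S : Type*} [Group S] [Finite S] [IsSimpleGroup S]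
    (hna : ∃ x y : S, x * y ≠ y * x) (a b : ℕ) (hd : 2 ≤ a + b)
    (x₁ x₂ : Fin a → (Fin (tauInv S (a + b)) → S))
    (y₁ y₂ : Fin b → (Fin (tauInv S (a + b)) → S))
    (he₁ : Subgroup.closure (Set.range x₁ ∪ Set.range y₁) = ⊤)
    (he₂ : Subgroup.closure (Set.range x₂ ∪ Set.range y₂) = ⊤) :
    ∃ k : MulAut (Fin (tauInv S (a + b)) → S),
      (∀ i, k (x₁ i) = x₂ i) ∧ (∀ j, k (y₁ j) = y₂ j) := by
  have hnt : Nontrivial S := by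
    obtain ⟨x, y, hxy⟩ := hna
    refine ⟨x, 1, fun h => hxy ?_⟩
    subst h; simp
  have hrange : ∀ (u : Fin a → (Fin (tauInv S (a+b)) → S))
      (v : Fin b → (Fin (tauInv S (a+b)) → S)),
      Set.range (Fin.append u v) = Set.range u ∪ Set.range v := by
    intro u v
    ext g
    constructor
    · rintro ⟨j, rfl⟩
      refine Fin.addCases (fun i => ?_) (fun i => ?_) j
      · left; exact ⟨i, (Fin.append_left u v i).symm⟩
      · right; exact ⟨i, (Fin.append_right u v i).symm⟩
    · rintro (⟨i, rfl⟩ | ⟨i, rfl⟩)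
      · exact ⟨Fin.castAdd b i, Fin.append_left u v i⟩
      · exact ⟨Fin.natAdd a i, Fin.append_right u v i⟩
  obtain ⟨k, hk⟩ := gen_trans hnt (Fin.append x₁ y₁) (Fin.append x₂ y₂)
    (by rw [hrange]; exact he₁) (by rw [hrange]; exact he₂)
  refine ⟨k, fun i => ?_, fun j => ?_⟩
  · have := hk (Fin.castAdd b i)
    rwa [Fin.append_left, Fin.append_left] at this
  · have := hk (Fin.natAdd a j)
    rwa [Fin.append_right, Fin.append_right] at this
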